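/- For every integer h > 1, the language L_h = (a b^h)^+ over the alphabet {a, b} is not h-strictly locally testable: for no choice of sets I, T ⊆ {a,b}^{h−1} and F ⊆ {a,b}^h do these sets define L_h, since the words a b^h ∈ L_h and a b^{h+1} ∉ L_h have the same prefix of length h−1, the same suffix of length h−1, and the same set of factors of length h. -/

import Mathlib

/-- `L` is `k`-strictly locally testable, as defined by the sets `I` (allowed
prefixes of length `k-1`), `T` (allowed suffixes of length `k-1`) and `F`
(allowed factors of length `k`): membership of words of length `< k` is
unconstrained. -/
def IsSLTWith {B : Type} (k : ℕ) (I T F : Set (List B)) (L : Set (List B)) : Prop :=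
  (∀ w ∈ I, w.length = k - 1) ∧ (∀ w ∈ T, w.length = k - 1) ∧ (∀ w ∈ F, w.length = k) ∧
  ∀ x : List B, k ≤ x.length →
    (x ∈ L ↔ x.take (k - 1) ∈ I ∧ x.drop (x.length - (k - 1)) ∈ T ∧
      ∀ y : List B, y.length = k → y <:+: x → y ∈ F)

/-- `L` is `k`-strictly locally testable. -/
def IsSLT {B : Type} (k : ℕ) (L : Set (List B)) : Prop :=
  ∃ I T F, IsSLTWith k I T F L

/-- `L ⊆ A⁺` is `(m,k)`-homomorphic: it is the letterwise homomorphic image of a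
`k`-slt language `L' ⊆ B⁺` over an alphabet `B` of cardinality `m`. -/
def IsHomomorphic {A : Type} (m k : ℕ) (L : Set (List A)) : Prop :=
  ∃ (B : Type) (instB : Fintype B) (L' : Set (List B)) (π : B → A),
    @Fintype.card B instB = m ∧ IsSLT k L' ∧ [] ∉ L' ∧ L = (List.map π) '' L'

/-- The two-letter alphabet `{a, b}`. -/
inductive Letter : Type
  | a : Letter
  | b : Letter
deriving DecidableEq

instance : Fintype Letter :=
  ⟨{Letter.a, Letter.b}, fun x => by cases x <;> simp⟩

/-- The language `L_h = (a b^h)⁺`. -/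
def Lh (h : ℕ) : Set (List Letter) :=
  {w | ∃ j : ℕ, 1 ≤ j ∧ w = (List.replicate j (Letter.a :: List.replicate h Letter.b)).flatten}

theorem IsSLTWith.mem_of_take_drop_infix {B : Type} {k : ℕ} {I T F L : Set (List B)}
    (hL : IsSLTWith k I T F L) {x y : List B} (hkx : k ≤ x.length) (hky : k ≤ y.length)
    (hx : x ∈ L) (htake : x.take (k - 1) = y.take (k - 1))
    (hdrop : x.drop (x.length - (k - 1)) = y.drop (y.length - (k - 1)))
    (hinfix : ∀ w : List B, w.length = k → w <:+: y → w <:+: x) :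
    y ∈ L := by
  obtain ⟨hI, hT, hF⟩ := (hL.2.2.2 x hkx).1 hx
  exact (hL.2.2.2 y hky).2 ⟨htake ▸ hI, hdrop ▸ hT, fun w hw hwy => hF w hw (hinfix w hw hwy)⟩

theorem not_isSLT_of_take_drop_infix {B : Type} {k : ℕ} {L : Set (List B)} {x y : List B}
    (hkx : k ≤ x.length) (hky : k ≤ y.length) (hx : x ∈ L) (hy : y ∉ L)
    (htake : x.take (k - 1) = y.take (k - 1))
    (hdrop : x.drop (x.length - (k - 1)) = y.drop (y.length - (k - 1)))
    (hinfix : ∀ w : List B, w.length = k → (w <:+: x ↔ w <:+: y)) :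
    ¬ IsSLT k L := by
  rintro ⟨I, T, F, hL⟩
  exact hy (hL.mem_of_take_drop_infix hkx hky hx htake hdrop fun w hw => (hinfix w hw).2)

namespace List

variable {α : Type*} {x y : α}

theorem take_cons_replicate_add {k m : ℕ} (d : ℕ) (hk : k ≤ m + 1) :
    (x :: replicate (m + d) y).take k = (x :: replicate m y).take k := by
  rw [replicate_add, ← cons_append, take_append_of_le_length (by simpa using hk)]

theorem drop_length_sub_cons_replicate {k n : ℕ} (hk : k ≤ n) :
    (x :: replicate n y).drop ((x :: replicate n y).length - k) = replicate k y := by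
  rw [length_cons, length_replicate, Nat.succ_sub hk, drop_succ_cons, drop_replicate,
    Nat.sub_sub_self hk]

theorem infix_cons_replicate_iff {w : List α} {n : ℕ} (hw : w.length ≤ n) :
    w <:+: x :: replicate n y ↔
      w = (x :: replicate n y).take w.length ∨ w = replicate w.length y := by
  rw [infix_cons_iff, prefix_iff_eq_take, infix_replicate_iff, and_iff_right hw]

theorem infix_cons_replicate_add_iff {w : List α} {m : ℕ} (d : ℕ) (hw : w.length ≤ m) :
    w <:+: x :: replicate (m + d) y ↔ w <:+: x :: replicate m y := by
  rw [infix_cons_replicate_iff (by omega), infix_cons_replicate_iff hw,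
    take_cons_replicate_add d (by omega)]

end List

theorem cons_replicate_mem_Lh (h : ℕ) : Letter.a :: List.replicate h Letter.b ∈ Lh h :=
  ⟨1, le_rfl, by simp⟩

theorem cons_replicate_succ_not_mem_Lh (h : ℕ) :
    Letter.a :: List.replicate (h + 1) Letter.b ∉ Lh h := by
  rintro ⟨j, -, hj⟩
  -- each block `a b^h` contributes one `a`, so the word would be a single block
  have hcount := congrArg (List.count Letter.a) hj
  simp only [List.count_cons_self, List.count_replicate, beq_iff_eq, reduceCtorEq, ↓reduceIte,
    zero_add, List.count_flatten, List.map_replicate, List.sum_replicate, smul_eq_mul,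
    mul_one] at hcount
  subst hcount
  simp at hj

theorem Lh_not_h_slt_general (h : ℕ) :
    ¬ IsSLT h (Lh h) ∧
    (Letter.a :: List.replicate h Letter.b) ∈ Lh h ∧
    (Letter.a :: List.replicate (h + 1) Letter.b) ∉ Lh h ∧
    (Letter.a :: List.replicate h Letter.b).take (h - 1) =
      (Letter.a :: List.replicate (h + 1) Letter.b).take (h - 1) ∧
    (Letter.a :: List.replicate h Letter.b).drop
        ((Letter.a :: List.replicate h Letter.b).length - (h - 1)) =
      (Letter.a :: List.replicate (h + 1) Letter.b).drop
        ((Letter.a :: List.replicate (h + 1) Letter.b).length - (h - 1)) ∧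
    (∀ w : List Letter, w.length = h →
      (w <:+: (Letter.a :: List.replicate h Letter.b) ↔
        w <:+: (Letter.a :: List.replicate (h + 1) Letter.b))) := by
  have hmem := cons_replicate_mem_Lh h
  have hnmem := cons_replicate_succ_not_mem_Lh h
  have htake := (List.take_cons_replicate_add (x := Letter.a) (y := Letter.b) (m := h)
    (k := h - 1) 1 (by omega)).symm
  have hdrop := (List.drop_length_sub_cons_replicate (x := Letter.a) (y := Letter.b)
    (k := h - 1) (n := h) (by omega)).trans
    (List.drop_length_sub_cons_replicate (x := Letter.a) (n := h + 1) (by omega)).symm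
  have hinfix := fun (w : List Letter) (hw : w.length = h) =>
    (List.infix_cons_replicate_add_iff (x := Letter.a) (y := Letter.b) 1 hw.le).symm
  exact ⟨not_isSLT_of_take_drop_infix (by simp) (by simp; omega) hmem hnmem htake hdrop hinfix,
    hmem, hnmem, htake, hdrop, hinfix⟩

/-- For `h > 1`, `L_h = (a b^h)⁺` is not `h`-strictly locally
testable: no sets `I, T ⊆ {a,b}^{h-1}`, `F ⊆ {a,b}^h` define `L_h`, since
`a b^h ∈ L_h` and `a b^{h+1} ∉ L_h` have the same prefix of length `h-1`, the
same suffix of length `h-1`, and the same set of factors of length `h`. -/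
theorem Lh_not_h_slt (h : ℕ) (hh : 1 < h) :
    ¬ IsSLT h (Lh h) ∧
    (Letter.a :: List.replicate h Letter.b) ∈ Lh h ∧
    (Letter.a :: List.replicate (h + 1) Letter.b) ∉ Lh h ∧
    (Letter.a :: List.replicate h Letter.b).take (h - 1) =
      (Letter.a :: List.replicate (h + 1) Letter.b).take (h - 1) ∧
    (Letter.a :: List.replicate h Letter.b).drop
        ((Letter.a :: List.replicate h Letter.b).length - (h - 1)) =
      (Letter.a :: List.replicate (h + 1) Letter.b).drop
        ((Letter.a :: List.replicate (h + 1) Letter.b).length - (h - 1)) ∧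
    (∀ w : List Letter, w.length = h →
      (w <:+: (Letter.a :: List.replicate h Letter.b) ↔
        w <:+: (Letter.a :: List.replicate (h + 1) Letter.b))) :=
  Lh_not_h_slt_general h
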